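/- arXiv:1005.3957 — 2 statements merged into one kernel-verified Lean document; each statement's English description precedes it below -/
import Mathlib

section
/- Let a_β = ∑_{n ∈ ℤ, n ≠ 0} 1/(1 + 4π²β n²) for β > 0. Then β^{1/2} · a_β converges to 1/2 as β → 0⁺. -/
open Filter Real MeasureTheory intervalIntegral

lemma cont_int (a b : ℝ) : IntervalIntegrable (fun x : ℝ => 1 / (1 + x ^ 2)) volume a b :=
  (continuous_const.div (by continuity) (fun x => by positivity)).intervalIntegrable a b

lemma aux1 {a b : ℝ} (ha : 0 ≤ a) (hab : a ≤ b) :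
    (b - a) * (1 / (1 + b ^ 2)) ≤ arctan b - arctan a := by
  rw [← integral_one_div_one_add_sq]
  calc (b - a) * (1 / (1 + b ^ 2)) = ∫ _ in a..b, 1 / (1 + b ^ 2) := by
        rw [intervalIntegral.integral_const, smul_eq_mul]
    _ ≤ ∫ x in a..b, 1 / (1 + x ^ 2) := by
        apply intervalIntegral.integral_mono_on hab (intervalIntegrable_const) (cont_int a b)
        intro x hx
        apply one_div_le_one_div_of_le (by positivity)
        nlinarith [hx.1, hx.2]

lemma aux2 {a b : ℝ} (ha : 0 ≤ a) (hab : a ≤ b) :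
    arctan b - arctan a ≤ (b - a) * (1 / (1 + a ^ 2)) := by
  rw [← integral_one_div_one_add_sq]
  calc (∫ x in a..b, 1 / (1 + x ^ 2)) ≤ ∫ _ in a..b, 1 / (1 + a ^ 2) := by
        apply intervalIntegral.integral_mono_on hab (cont_int a b) (intervalIntegrable_const)
        intro x hx
        apply one_div_le_one_div_of_le (by positivity)
        nlinarith [hx.1, hx.2]
    _ = (b - a) * (1 / (1 + a ^ 2)) := by rw [intervalIntegral.integral_const, smul_eq_mul]

lemma tele {c : ℝ} (hc : 0 < c) (d : ℝ) :
    HasSum (fun n : ℕ => arctan (c * (n + 1 + d)) - arctan (c * (n + d)))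
      (π / 2 - arctan (c * d)) := by
  have hmono : ∀ n : ℕ, 0 ≤ arctan (c * (n + 1 + d)) - arctan (c * (n + d)) := by
    intro n
    have : c * (n + d) ≤ c * (n + 1 + d) := by nlinarith
    linarith [arctan_strictMono.monotone this]
  rw [hasSum_iff_tendsto_nat_of_nonneg hmono]
  have hsum : ∀ N : ℕ, ∑ n ∈ Finset.range N,
      (arctan (c * (n + 1 + d)) - arctan (c * (n + d))) = arctan (c * (N + d)) - arctan (c * d) := by
    intro N
    rw [show arctan (c * d) = arctan (c * ((0 : ℕ) + d)) by norm_num,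
      ← Finset.sum_range_sub (f := fun n : ℕ => arctan (c * (n + d)))]
    apply Finset.sum_congr rfl
    intro i _
    push_cast
    ring_nf
  simp only [hsum]
  apply Tendsto.sub_const
  have h1 : Tendsto (fun N : ℕ => c * (N + d)) atTop atTop := by
    apply Tendsto.const_mul_atTop hc
    exact tendsto_atTop_add_const_right atTop d tendsto_natCast_atTop_atTop
  exact (tendsto_arctan_atTop.mono_right nhdsWithin_le_nhds).comp h1

lemma main_bounds {β : ℝ} (hβ : 0 < β) :
    1/2 - arctan (2 * π * Real.sqrt β) / π ≤
      Real.sqrt β * ∑' n : ℤ, (if n = 0 then (0:ℝ) else 1 / (1 + 4 * π ^ 2 * β * (n : ℝ) ^ 2)) ∧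
    Real.sqrt β * ∑' n : ℤ, (if n = 0 then (0:ℝ) else 1 / (1 + 4 * π ^ 2 * β * (n : ℝ) ^ 2))
      ≤ 1/2 := by
  set c : ℝ := 2 * π * Real.sqrt β with hc_def
  have hc0 : 0 < c := by
    have := Real.sqrt_pos.mpr hβ
    positivity
  have hterm : ∀ x : ℝ, 4 * π ^ 2 * β * x ^ 2 = (c * x) ^ 2 := by
    intro x
    rw [hc_def, mul_pow, mul_pow, mul_pow, Real.sq_sqrt hβ.le]
    ring
  set u : ℕ → ℝ := fun n => 1 / (1 + (c * (n + 1)) ^ 2) with hu_def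
  have hu_pos : ∀ n, 0 < u n := fun n => by positivity
  have tele0 : HasSum (fun n : ℕ => arctan (c * (n + 1)) - arctan (c * n)) (π / 2) := by
    simpa using tele hc0 0
  have tele1 : HasSum (fun n : ℕ => arctan (c * (n + 1 + 1)) - arctan (c * (n + 1)))
      (π / 2 - arctan c) := by simpa using tele hc0 1
  have hub : ∀ n : ℕ, c * u n ≤ arctan (c * (n + 1)) - arctan (c * n) := by
    intro n
    have h := aux1 (a := c * n) (b := c * (n + 1)) (by positivity) (by nlinarith)
    calc c * u n = (c * (n + 1) - c * n) * (1 / (1 + (c * (n + 1)) ^ 2)) := by ring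
      _ ≤ _ := h
  have hlb : ∀ n : ℕ, arctan (c * (n + 1 + 1)) - arctan (c * (n + 1)) ≤ c * u n := by
    intro n
    have h := aux2 (a := c * (n + 1)) (b := c * (n + 1 + 1)) (by positivity) (by nlinarith)
    calc arctan (c * (n + 1 + 1)) - arctan (c * (n + 1))
        ≤ (c * (n + 1 + 1) - c * (n + 1)) * (1 / (1 + (c * (n + 1)) ^ 2)) := h
      _ = c * u n := by ring
  have hcu : Summable (fun n => c * u n) :=
    Summable.of_nonneg_of_le (fun n => by positivity) hub tele0.summable
  have hsum_u : Summable u := by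
    refine (hcu.mul_left c⁻¹).congr fun n => ?_
    field_simp
  set S : ℝ := ∑' n, u n with hS_def
  have hc_tsum : c * S = ∑' n, c * u n := (tsum_mul_left).symm
  have hupper : c * S ≤ π / 2 := by
    rw [hc_tsum, ← tele0.tsum_eq]
    exact Summable.tsum_le_tsum hub hcu tele0.summable
  have hlower : π / 2 - arctan c ≤ c * S := by
    rw [hc_tsum, ← tele1.tsum_eq]
    exact Summable.tsum_le_tsum hlb tele1.summable hcu
  set f : ℤ → ℝ := fun n => if n = 0 then (0:ℝ) else 1 / (1 + 4 * π ^ 2 * β * (n : ℝ) ^ 2)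
    with hf_def
  have hf1 : ∀ n : ℕ, f ((n : ℤ) + 1) = u n := by
    intro n
    rw [hf_def]
    simp only
    rw [if_neg (by omega), hu_def]
    push_cast
    rw [hterm]
  have hf2 : ∀ n : ℕ, f (-((n : ℤ) + 1)) = u n := by
    intro n
    rw [hf_def]
    simp only
    rw [if_neg (by omega), hu_def]
    push_cast
    rw [show (-((n:ℝ)+1))^2 = ((n:ℝ)+1)^2 by ring, hterm]
  have hs1 : Summable (fun n : ℕ => f ((n : ℤ) + 1)) := hsum_u.congr fun n => (hf1 n).symm
  have hs2 : Summable (fun n : ℕ => f (-((n : ℤ) + 1))) := hsum_u.congr fun n => (hf2 n).symm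
  have htsum : ∑' n : ℤ, f n = S + 0 + S := by
    rw [tsum_of_add_one_of_neg_add_one hs1 hs2, tsum_congr hf1, tsum_congr hf2,
      show f 0 = 0 from if_pos rfl]
  have hβs : Real.sqrt β * (S + 0 + S) = (c * S) / π := by
    rw [hc_def]
    field_simp
    ring
  constructor
  · rw [htsum, hβs]
    have h1 : (π / 2 - arctan c) / π ≤ (c * S) / π := by gcongr
    calc 1/2 - arctan c / π = (π / 2 - arctan c) / π := by field_simp
      _ ≤ (c * S) / π := h1
  · rw [htsum, hβs]
    calc (c * S) / π ≤ (π / 2) / π := by gcongr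
      _ = 1/2 := by field_simp

/-- With `a_β = ∑_{n ≠ 0} 1/(1 + 4π²β n²)`, one has `β^(1/2) a_β → 1/2` as `β → 0⁺`. -/
theorem stmt_6 :
    Tendsto
      (fun β : ℝ =>
        Real.sqrt β * ∑' n : ℤ, if n = 0 then 0 else 1 / (1 + 4 * π ^ 2 * β * (n : ℝ) ^ 2))
      (nhdsWithin 0 (Set.Ioi 0)) (nhds (1/2)) := by
  apply tendsto_of_tendsto_of_tendsto_of_le_of_le'
    (g := fun β : ℝ => 1/2 - arctan (2 * π * Real.sqrt β) / π) (h := fun _ : ℝ => 1/2)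
  · have hcont : Continuous fun β : ℝ => 1/2 - arctan (2 * π * Real.sqrt β) / π :=
      continuous_const.sub ((Real.continuous_arctan.comp
        (continuous_const.mul Real.continuous_sqrt)).div_const π)
    have := (hcont.tendsto 0).mono_left (nhdsWithin_le_nhds (s := Set.Ioi 0))
    simpa using this
  · exact tendsto_const_nhds
  · filter_upwards [self_mem_nhdsWithin] with β hβ
    exact (main_bounds hβ).1
  · filter_upwards [self_mem_nhdsWithin] with β hβ
    exact (main_bounds hβ).2
end

section
/- Let (Ω, μ) be a probability space and F a real random variable such that ‖F‖_{L^q(μ)} ≤ C q² A for all q ≥ 2, where C, A > 0. Then there exist constants c > 0 and C' (depending only on C) such that E[exp(c A^{-1/2} |F|^{1/2})] ≤ C'. -/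
/-!
Write `Y = √(|F| / A)` and expand `exp (c Y)` in its Taylor series, integrated term by term.
At `q = n / 2` the hypothesis reads `E[Yⁿ] ≤ (√C n / 2)ⁿ` for `n ≥ 4`, and `nⁿ ≤ n! eⁿ` bounds
the `n`-th term by `(c e √C / 2)ⁿ`; the terms with `n < 4` are controlled by `E[Y⁴]`. For `c`
small enough, the series is dominated by a geometric series whose sum depends only on `C`.
-/

open MeasureTheory Real
open scoped Nat

section

variable {Ω : Type*} [MeasurableSpace Ω] {μ : Measure Ω}

lemma MeasureTheory.AEStronglyMeasurable.of_exp {g : Ω → ℝ}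
    (h : AEStronglyMeasurable (fun ω => exp (g ω)) μ) : AEStronglyMeasurable g μ := by
  simpa only [Function.comp_def, log_exp] using
    (measurable_log.comp_aemeasurable h.aemeasurable).aestronglyMeasurable

lemma integrable_pow_div_factorial_of_integrable_exp {g : Ω → ℝ} (hg : ∀ ω, 0 ≤ g ω)
    (h : Integrable (fun ω => exp (g ω)) μ) (n : ℕ) :
    Integrable (fun ω => g ω ^ n / n !) μ :=
  h.mono'
    ((h.aestronglyMeasurable.of_exp.aemeasurable.pow_const n).div_const _).aestronglyMeasurable
    (ae_of_all _ fun ω => by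
      rw [norm_of_nonneg (by have := hg ω; positivity)]
      exact pow_div_factorial_le_exp _ (hg ω) n)

lemma integrable_pow_of_integrable_exp_mul {Y : Ω → ℝ} {c : ℝ} (hY : ∀ ω, 0 ≤ Y ω)
    (hc : 0 < c) (h : Integrable (fun ω => exp (c * Y ω)) μ) (n : ℕ) :
    Integrable (fun ω => Y ω ^ n) μ := by
  refine ((integrable_pow_div_factorial_of_integrable_exp
    (fun ω => mul_nonneg hc.le (hY ω)) h n).const_mul (n ! / c ^ n)).congr
    (ae_of_all _ fun ω => ?_)
  simp only [mul_pow]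
  field_simp

theorem integral_exp_le_tsum_of_integral_pow_div_factorial_le {g : Ω → ℝ} (hg : ∀ ω, 0 ≤ g ω)
    (hint : Integrable (fun ω => exp (g ω)) μ) {b : ℕ → ℝ} (hb : Summable b)
    (hle : ∀ n, ∫ ω, g ω ^ n / n ! ∂μ ≤ b n) : ∫ ω, exp (g ω) ∂μ ≤ ∑' n, b n := by
  have hterm_nonneg : ∀ n ω, 0 ≤ g ω ^ n / n ! := fun n ω => by
    have := hg ω; positivity
  have hsum : Summable fun n => ∫ ω, ‖g ω ^ n / (n ! : ℝ)‖ ∂μ := by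
    simp only [fun n ω => norm_of_nonneg (hterm_nonneg n ω)]
    exact hb.of_nonneg_of_le (fun n => integral_nonneg (hterm_nonneg n)) hle
  have hexp : ∀ ω, exp (g ω) = ∑' n, g ω ^ n / n ! := fun ω => by
    rw [exp_eq_exp_ℝ, (NormedSpace.expSeries_div_hasSum_exp (g ω)).tsum_eq]
  simp only [hexp]
  rw [← integral_tsum_of_summable_integral_norm
    (integrable_pow_div_factorial_of_integrable_exp hg hint) hsum]
  exact (hsum.congr fun n => integral_congr_ae (ae_of_all _ fun ω =>
    norm_of_nonneg (hterm_nonneg n ω))).tsum_le_tsum hle hb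

lemma pow_le_one_add_pow {x : ℝ} (hx : 0 ≤ x) {n m : ℕ} (hnm : n ≤ m) : x ^ n ≤ 1 + x ^ m := by
  rcases le_total x 1 with hx1 | hx1
  · linarith [pow_le_one₀ (n := n) hx hx1, pow_nonneg hx m]
  · linarith [pow_le_pow_right₀ hx1 hnm]

lemma integral_pow_le_one_add_integral_pow [IsProbabilityMeasure μ] {Y : Ω → ℝ}
    (hY : ∀ ω, 0 ≤ Y ω) {n m : ℕ} (hnm : n ≤ m) (hn : Integrable (fun ω => Y ω ^ n) μ)
    (hm : Integrable (fun ω => Y ω ^ m) μ) :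
    ∫ ω, Y ω ^ n ∂μ ≤ 1 + ∫ ω, Y ω ^ m ∂μ :=
  calc ∫ ω, Y ω ^ n ∂μ ≤ ∫ ω, (1 + Y ω ^ m) ∂μ :=
        integral_mono hn ((integrable_const 1).add hm) fun ω => pow_le_one_add_pow (hY ω) hnm
  _ = 1 + ∫ ω, Y ω ^ m ∂μ := by rw [integral_add (integrable_const 1) hm]; simp

lemma mul_natCast_pow_div_factorial_le {a : ℝ} (ha : 0 ≤ a) (n : ℕ) :
    (a * n) ^ n / n ! ≤ (a * exp 1) ^ n :=
  calc (a * n) ^ n / n ! = a ^ n * ((n : ℝ) ^ n / n !) := by rw [mul_pow, mul_div_assoc]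
  _ ≤ a ^ n * exp n := by gcongr; exact pow_div_factorial_le_exp _ n.cast_nonneg n
  _ = (a * exp 1) ^ n := by rw [mul_pow, ← exp_nat_mul, mul_one]

theorem integral_exp_mul_le_of_integral_pow_le [IsProbabilityMeasure μ] {Y : Ω → ℝ}
    (hY : ∀ ω, 0 ≤ Y ω) {a c : ℝ} (ha : 0 ≤ a) (hc : 0 < c) (hc_half : c ≤ 1 / 2)
    (hca : c * (a * exp 1) ≤ 1 / 2) {m : ℕ} (hmom : ∀ n, m ≤ n → ∫ ω, Y ω ^ n ∂μ ≤ (a * n) ^ n) :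
    ∫ ω, exp (c * Y ω) ∂μ ≤ 2 * (1 + (a * m) ^ m) := by
  by_cases hint : Integrable (fun ω => exp (c * Y ω)) μ
  swap
  · -- the Bochner integral of a non-integrable function is `0`
    rw [integral_undef hint]; positivity
  set M := 1 + (a * m) ^ m
  have hM : 1 ≤ M := le_add_of_nonneg_right (by positivity)
  have hterm : ∀ n : ℕ, ∫ ω, (c * Y ω) ^ n / n ! ∂μ ≤ M * (1 / 2) ^ n := by
    intro n
    have hrw : ∫ ω, (c * Y ω) ^ n / n ! ∂μ = c ^ n / n ! * ∫ ω, Y ω ^ n ∂μ := by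
      rw [← integral_const_mul]
      congr 1 with ω
      ring
    rw [hrw]
    rcases le_total n m with hnm | hmn
    · have hpow := integrable_pow_of_integrable_exp_mul hY hc hint
      calc c ^ n / n ! * ∫ ω, Y ω ^ n ∂μ ≤ (1 / 2) ^ n * M := by
            gcongr ?_ * ?_
            · exact integral_nonneg fun ω => pow_nonneg (hY ω) n
            · exact (div_le_self (by positivity) (by exact_mod_cast n.factorial_pos)).trans
                (pow_le_pow_left₀ hc.le hc_half n)
            · calc ∫ ω, Y ω ^ n ∂μ ≤ 1 + ∫ ω, Y ω ^ m ∂μ :=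
                    integral_pow_le_one_add_integral_pow hY hnm (hpow n) (hpow m)
              _ ≤ M := add_le_add_right (hmom m le_rfl) 1
      _ = M * (1 / 2) ^ n := mul_comm _ _
    · calc c ^ n / n ! * ∫ ω, Y ω ^ n ∂μ ≤ c ^ n * ((a * n) ^ n / n !) := by
            rw [← mul_div_right_comm, mul_div_assoc]
            gcongr
            exact hmom n hmn
      _ ≤ c ^ n * (a * exp 1) ^ n := by gcongr; exact mul_natCast_pow_div_factorial_le ha n
      _ = (c * (a * exp 1)) ^ n := (mul_pow _ _ _).symm
      _ ≤ (1 / 2) ^ n := pow_le_pow_left₀ (by positivity) hca n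
      _ ≤ M * (1 / 2) ^ n := le_mul_of_one_le_left (by positivity) hM
  calc ∫ ω, exp (c * Y ω) ∂μ ≤ ∑' n : ℕ, M * (1 / 2) ^ n :=
        integral_exp_le_tsum_of_integral_pow_div_factorial_le (fun ω => mul_nonneg hc.le (hY ω))
          hint (summable_geometric_two.mul_left M) hterm
  _ = 2 * M := by rw [tsum_mul_left, tsum_geometric_two, mul_comm]

lemma integral_abs_div_rpow_le {F : Ω → ℝ} {A K q : ℝ} (hA : 0 < A) (hK : 0 ≤ K) (hq : 0 < q)
    (h : (∫ ω, |F ω| ^ q ∂μ) ^ (1 / q) ≤ K * A) : ∫ ω, (|F ω| / A) ^ q ∂μ ≤ K ^ q := by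
  have hI : 0 ≤ ∫ ω, |F ω| ^ q ∂μ := integral_nonneg fun ω => rpow_nonneg (abs_nonneg _) q
  have hI_le := (rpow_inv_le_iff_of_pos hI (mul_nonneg hK hA.le) hq).mp (by rwa [← one_div])
  simp_rw [div_rpow (abs_nonneg _) hA.le]
  rwa [integral_div, div_le_iff₀ (by positivity), ← mul_rpow hK hA.le]

lemma integral_sqrt_abs_div_pow_le {F : Ω → ℝ} {A C : ℝ} (hA : 0 < A) (hC : 0 ≤ C)
    (hmom : ∀ q : ℝ, 2 ≤ q → (∫ ω, |F ω| ^ q ∂μ) ^ (1 / q) ≤ C * q ^ 2 * A)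
    (n : ℕ) (hn : 4 ≤ n) : ∫ ω, √(|F ω| / A) ^ n ∂μ ≤ (√C / 2 * n) ^ n := by
  have hq : (2 : ℝ) ≤ n / 2 := by
    rw [le_div_iff₀ two_pos]; exact_mod_cast hn
  have hbound := integral_abs_div_rpow_le hA (by positivity) (by linarith) (hmom _ hq)
  simp_rw [rpow_div_two_eq_sqrt _ (div_nonneg (abs_nonneg _) hA.le), rpow_natCast] at hbound
  rw [rpow_div_two_eq_sqrt _ (by positivity), rpow_natCast, sqrt_mul hC, sqrt_sq (by positivity)]
    at hbound
  exact hbound.trans_eq (by ring)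

end

lemma exists_pos_le_half_and_mul_le_half {b : ℝ} (hb : 0 ≤ b) :
    ∃ c : ℝ, 0 < c ∧ c ≤ 1 / 2 ∧ c * b ≤ 1 / 2 := by
  refine ⟨(2 * (b + 1))⁻¹, by positivity, ?_, ?_⟩
  · rw [one_div, inv_le_inv₀ (by positivity) two_pos]; linarith
  · rw [inv_mul_le_iff₀ (by positivity)]; linarith

/-- If `‖F‖_{L^q(μ)} ≤ C q² A` for all `q ≥ 2`, then `E[exp (c A^{-1/2} |F|^{1/2})] ≤ C'`
for constants `c > 0` and `C'` depending only on `C`. -/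
theorem stmt_15 {Ω : Type*} [MeasurableSpace Ω] (C : ℝ) (hC : 0 < C) :
    ∃ c : ℝ, 0 < c ∧ ∃ C' : ℝ,
      ∀ (μ : Measure Ω), IsProbabilityMeasure μ →
      ∀ (F : Ω → ℝ) (A : ℝ), 0 < A →
      (∀ q : ℝ, 2 ≤ q → (∫ ω, |F ω| ^ q ∂μ) ^ (1/q) ≤ C * q ^ 2 * A) →
      ∫ ω, Real.exp (c * A ^ (-(1:ℝ)/2) * |F ω| ^ ((1:ℝ)/2)) ∂μ ≤ C' := by
  obtain ⟨c, hc_pos, hc_half, hca⟩ :=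
    exists_pos_le_half_and_mul_le_half (b := √C / 2 * exp 1) (by positivity)
  refine ⟨c, hc_pos, 2 * (1 + (2 * √C) ^ 4), fun μ hμ F A hA hmom => ?_⟩
  have hrw : ∀ ω, c * A ^ (-(1:ℝ)/2) * |F ω| ^ ((1:ℝ)/2) = c * √(|F ω| / A) := fun ω => by
    rw [neg_div, rpow_neg hA.le, ← sqrt_eq_rpow, ← sqrt_eq_rpow, sqrt_div' _ hA.le]; ring
  simp only [hrw]
  have hmoments := integral_sqrt_abs_div_pow_le hA hC.le hmom
  exact (integral_exp_mul_le_of_integral_pow_le (fun ω => sqrt_nonneg (|F ω| / A))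
    (by positivity) hc_pos hc_half hca hmoments).trans_eq (by push_cast; ring)
end
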